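/- arXiv:2206.04572 — 4 statements merged into one kernel-verified Lean document; each statement's English description precedes it below -/
import Mathlib

section
/- Suppose T(P,Q) ≥ f and T(Q,R) ≥ g pointwise on [0,1], where f and g are tradeoff functions. Then T(P,R) ≥ g ∘ f pointwise. -/
open MeasureTheory Real Set Filter

/-- The tradeoff function `T(P,Q)(α) = inf {1 - E_Q φ : φ a test with E_P φ ≥ 1 - α}`. -/
noncomputable def tradeoff {Ω : Type*} [MeasurableSpace Ω] (P Q : Measure Ω) (α : ℝ) : ℝ :=
  sInf { r : ℝ | ∃ φ : Ω → ℝ, Measurable φ ∧ (∀ x, φ x ∈ Icc (0:ℝ) 1) ∧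
    1 - α ≤ ∫ x, φ x ∂P ∧ r = 1 - ∫ x, φ x ∂Q }

/-- `f` is (the restriction to `[0,1]` of) a tradeoff function: convex, continuous,
non-decreasing, with `0 ≤ f x ≤ x` on `[0,1]`. -/
def IsTradeoff (f : ℝ → ℝ) : Prop :=
  ConvexOn ℝ (Icc 0 1) f ∧ ContinuousOn f (Icc 0 1) ∧ MonotoneOn f (Icc 0 1) ∧
  (∀ x ∈ Icc (0:ℝ) 1, 0 ≤ f x ∧ f x ≤ x)

/-- A symmetric tradeoff function: `f = T(P,Q) = T(Q,P)` for some distributions. -/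
def IsSymmTradeoff (f : ℝ → ℝ) : Prop :=
  ∃ P Q : Measure ℝ, IsProbabilityMeasure P ∧ IsProbabilityMeasure Q ∧
    (∀ α ∈ Icc (0:ℝ) 1, f α = tradeoff P Q α) ∧ (∀ α ∈ Icc (0:ℝ) 1, f α = tradeoff Q P α)

/-- Nontrivial tradeoff function: `f α < α` somewhere on `(0,1)`. -/
def Nontrivial' (f : ℝ → ℝ) : Prop := ∃ α ∈ Ioo (0:ℝ) 1, f α < α

/-- Generalized inverse (quantile function) of a cdf. -/
noncomputable def qf (F : ℝ → ℝ) (α : ℝ) : ℝ := sInf {x : ℝ | α ≤ F x}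

/-- `F` (with law `μ`) is a canonical noise distribution for `f`. -/
def IsCND (f : ℝ → ℝ) (μ : Measure ℝ) (F : ℝ → ℝ) : Prop :=
  IsProbabilityMeasure μ ∧ Continuous F ∧ (∀ x, F x = (μ (Iic x)).toReal) ∧
  (∀ m ∈ Icc (0:ℝ) 1, ∀ α ∈ Icc (0:ℝ) 1, f α ≤ tradeoff μ (μ.map (· + m)) α) ∧
  (∀ α ∈ Ioo (0:ℝ) 1, tradeoff μ (μ.map (· + 1)) α = f α) ∧
  (∀ α ∈ Ioo (0:ℝ) 1, tradeoff μ (μ.map (· + 1)) α = F (qf F α - 1)) ∧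
  (∀ x : ℝ, F x = 1 - F (-x))

lemma test_integrable {Ω : Type*} [MeasurableSpace Ω] (μ : Measure Ω) [IsProbabilityMeasure μ]
    {φ : Ω → ℝ} (hm : Measurable φ) (hb : ∀ x, φ x ∈ Icc (0:ℝ) 1) : Integrable φ μ := by
  refine (integrable_const (1:ℝ)).mono' hm.aestronglyMeasurable (ae_of_all _ fun x => ?_)
  rw [Real.norm_eq_abs, abs_of_nonneg (hb x).1]; exact (hb x).2

lemma test_integral_mem {Ω : Type*} [MeasurableSpace Ω] (μ : Measure Ω) [IsProbabilityMeasure μ]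
    {φ : Ω → ℝ} (hm : Measurable φ) (hb : ∀ x, φ x ∈ Icc (0:ℝ) 1) :
    ∫ x, φ x ∂μ ∈ Icc (0:ℝ) 1 := by
  constructor
  · exact integral_nonneg fun x => (hb x).1
  · calc ∫ x, φ x ∂μ ≤ ∫ _, (1:ℝ) ∂μ :=
        integral_mono (test_integrable μ hm hb) (integrable_const 1) fun x => (hb x).2
    _ = 1 := by simp

lemma tradeoff_bddBelow {Ω : Type*} [MeasurableSpace Ω] (P Q : Measure Ω)
    [IsProbabilityMeasure Q] (α : ℝ) :
    BddBelow { r : ℝ | ∃ φ : Ω → ℝ, Measurable φ ∧ (∀ x, φ x ∈ Icc (0:ℝ) 1) ∧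
      1 - α ≤ ∫ x, φ x ∂P ∧ r = 1 - ∫ x, φ x ∂Q } := by
  refine ⟨0, fun r hr => ?_⟩
  obtain ⟨φ, hm, hb, _, hr⟩ := hr
  have := (test_integral_mem Q hm hb).2
  linarith [hr]

theorem stmt2 {Ω : Type*} [MeasurableSpace Ω] (P Q R : Measure Ω)
    [IsProbabilityMeasure P] [IsProbabilityMeasure Q] [IsProbabilityMeasure R]
    (f g : ℝ → ℝ) (hf : IsTradeoff f) (hg : IsTradeoff g)
    (hPQ : ∀ α ∈ Icc (0:ℝ) 1, f α ≤ tradeoff P Q α)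
    (hQR : ∀ α ∈ Icc (0:ℝ) 1, g α ≤ tradeoff Q R α) :
    ∀ α ∈ Icc (0:ℝ) 1, g (f α) ≤ tradeoff P R α := by
  intro α hα
  have hfα : f α ∈ Icc (0:ℝ) 1 := by
    obtain ⟨h1, h2⟩ := hf.2.2.2 α hα
    exact ⟨h1, h2.trans hα.2⟩
  refine le_csInf ⟨0, fun _ => 1, measurable_const, fun x => ⟨zero_le_one, le_refl 1⟩,
      by simp; linarith [hα.1], by simp⟩ ?_
  rintro r ⟨φ, hm, hb, hP, rfl⟩
  set β : ℝ := 1 - ∫ x, φ x ∂Q with hβ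
  have hmemQ := test_integral_mem Q hm hb
  have hβmem : β ∈ Icc (0:ℝ) 1 := ⟨by simp [hβ]; linarith [hmemQ.2], by simp [hβ]; linarith [hmemQ.1]⟩
  have h1 : tradeoff P Q α ≤ β := csInf_le (tradeoff_bddBelow P Q α) ⟨φ, hm, hb, hP, rfl⟩
  have h2 : f α ≤ β := (hPQ α hα).trans h1
  have h3 : g (f α) ≤ g β := hg.2.2.1 hfα hβmem h2
  have h4 : g β ≤ tradeoff Q R β := hQR β hβmem
  have h5 : tradeoff Q R β ≤ 1 - ∫ x, φ x ∂ R :=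
    csInf_le (tradeoff_bddBelow Q R β) ⟨φ, hm, hb, by simp [hβ], rfl⟩
  linarith
end

section
/- Let f be a symmetric nontrivial tradeoff function and F a canonical noise distribution for f. Then F satisfies the recurrence F(x) = 1 − f(1 − F(x−1)) whenever F(x−1) > 0, and F(x) = f(F(x+1)) whenever F(x+1) < 1. -/
open MeasureTheory Real Set Filter

open Topology in
theorem stmt5 (f : ℝ → ℝ) (μ : Measure ℝ) (F : ℝ → ℝ)
    (hf : IsTradeoff f) (hsymm : IsSymmTradeoff f) (hnt : Nontrivial' f)
    (hCND : IsCND f μ F) :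
    (∀ x : ℝ, 0 < F (x - 1) → F x = 1 - f (1 - F (x - 1))) ∧
    (∀ x : ℝ, F (x + 1) < 1 → F x = f (F (x + 1))) := by
  obtain ⟨hμ, hFc, hFdef, _h4, h5, h6, h7⟩ := hCND
  have hmono : Monotone F := by
    intro a b hab
    rw [hFdef a, hFdef b]
    exact ENNReal.toReal_mono (measure_ne_top μ _) (measure_mono (Iic_subset_Iic.2 hab))
  have hF0 : ∀ x, 0 ≤ F x := fun x => by rw [hFdef]; exact ENNReal.toReal_nonneg
  have hFeq : F = fun x => (μ (Iic x)).toReal := funext hFdef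
  have htop : Tendsto F atTop (𝓝 1) := by
    have h := tendsto_measure_Iic_atTop (μ := μ)
    rw [measure_univ] at h
    have h2 := (ENNReal.tendsto_toReal ENNReal.one_ne_top).comp h
    rw [hFeq]
    simpa [Function.comp_def] using h2
  have hbot : Tendsto F atBot (𝓝 0) := by
    have h1 : Tendsto (fun y : ℝ => F (-y)) atBot (𝓝 1) := htop.comp tendsto_neg_atBot_atTop
    have h2 : Tendsto (fun y : ℝ => 1 - F (-y)) atBot (𝓝 (1 - 1)) :=
      tendsto_const_nhds.sub h1
    norm_num at h2
    exact h2.congr fun y => (h7 y).symm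
  have key : ∀ x : ℝ, F (x + 1) < 1 → F x = f (F (x + 1)) := by
    intro x hx1
    rcases eq_or_lt_of_le (hF0 (x + 1)) with h0 | h0
    · -- F (x+1) = 0
      have h1 : F x ≤ F (x + 1) := hmono (by linarith)
      have h2 := hF0 x
      have hf0 := hf.2.2.2 0 ⟨le_rfl, zero_le_one⟩
      rw [← h0] at h1 ⊢
      have : F x = 0 := le_antisymm h1 h2
      rw [this]
      linarith [hf0.1, hf0.2]
    · -- 0 < F (x+1) < 1
      set α := F (x + 1) with hαdef
      have hαI : α ∈ Ioo (0:ℝ) 1 := ⟨h0, hx1⟩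
      have h56 : f α = F (qf F α - 1) := by rw [← h5 α hαI, h6 α hαI]
      have hbdd : BddBelow {y : ℝ | α ≤ F y} := by
        have hev : ∀ᶠ y in atBot, F y < α := hbot.eventually (eventually_lt_nhds h0)
        obtain ⟨y₀, hy₀⟩ := eventually_atBot.1 hev
        exact ⟨y₀, fun y (hy : α ≤ F y) =>
          le_of_not_gt fun h => absurd hy (not_le.2 (hy₀ y h.le))⟩
      have hq : qf F α ≤ x + 1 := csInf_le hbdd (le_of_eq hαdef)
      have hle : f α ≤ F x := by
        rw [h56]; exact hmono (by linarith)
      have hge : F x ≤ f α := by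
        have hforall : ∀ β ∈ Ioo α 1, F x ≤ f β := by
          intro β hβ
          have hβI : β ∈ Ioo (0:ℝ) 1 := ⟨h0.trans hβ.1, hβ.2⟩
          have hβ56 : f β = F (qf F β - 1) := by rw [← h5 β hβI, h6 β hβI]
          have hne : {y : ℝ | β ≤ F y}.Nonempty := by
            have hev : ∀ᶠ y in atTop, β ≤ F y := htop.eventually (eventually_ge_nhds hβ.2)
            exact hev.exists
          have hqβ : x + 1 ≤ qf F β := by
            apply le_csInf hne
            intro y (hy : β ≤ F y)
            by_contra h
            push_neg at h
            have hle2 : F y ≤ α := hαdef ▸ hmono h.le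
            exact absurd hy (not_le.2 (lt_of_le_of_lt hle2 hβ.1))
          rw [hβ56]
          exact hmono (by linarith)
        have hcont : Tendsto f (𝓝[Ioo α 1] α) (𝓝 (f α)) := by
          have hc := hf.2.1 α ⟨h0.le, hx1.le⟩
          exact hc.mono_left (nhdsWithin_mono α fun y hy => ⟨(h0.trans hy.1).le, hy.2.le⟩)
        have hnebot : (𝓝[Ioo α 1] α).NeBot := by
          rw [← mem_closure_iff_nhdsWithin_neBot, closure_Ioo (ne_of_lt hx1)]
          exact ⟨le_rfl, hx1.le⟩
        exact ge_of_tendsto hcont (eventually_mem_nhdsWithin.mono fun β hβ => hforall β hβ)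
      exact le_antisymm hge hle
  refine ⟨?_, key⟩
  intro x hx
  have hsym : F (-x + 1) = 1 - F (x - 1) := by
    have h1 := h7 (x - 1)
    have h2 : -x + 1 = -(x - 1) := by ring
    rw [h2]; linarith
  have h1 : F (-x + 1) < 1 := by rw [hsym]; linarith
  have h2 := key (-x) h1
  have h3 := h7 x
  rw [hsym] at h2
  linarith
end

section
/- Let f be a symmetric nontrivial tradeoff function, and let c ∈ [0,1] solve f(1−c) = c. Define F_f piecewise by F_f(x) = f(F_f(x+1)) for x < −1/2, F_f(x) = c(1/2 − x) + (1−c)(x + 1/2) for −1/2 ≤ x ≤ 1/2, and F_f(x) = 1 − f(1 − F_f(x−1)) for x > 1/2. Then F_f is a well-defined continuous cdf that is symmetric about zero, i.e., F_f(x) = 1 − F_f(−x) for all x. -/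
open MeasureTheory Real Set Filter

noncomputable def midf (c x : ℝ) : ℝ := c * (1/2 - x) + (1 - c) * (x + 1/2)

noncomputable def clmp (t : ℝ) : ℝ := max 0 (min 1 t)

noncomputable def GF (f : ℝ → ℝ) (c : ℝ) : ℕ → ℝ → ℝ
  | 0, x => midf c (max (-(1/2)) (min (1/2) x))
  | n+1, x =>
      if x ≤ -(1/2) then f (clmp (GF f c n (x+1)))
      else if x ≤ 1/2 then midf c x
      else 1 - f (clmp (1 - GF f c n (x-1)))

noncomputable def FF (f : ℝ → ℝ) (c : ℝ) (x : ℝ) : ℝ := GF f c ⌈|x|⌉₊ x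

lemma clmp_mem (t : ℝ) : clmp t ∈ Icc (0:ℝ) 1 :=
  ⟨le_max_left _ _, max_le zero_le_one (min_le_left _ _)⟩

lemma clmp_eq {t : ℝ} (h : t ∈ Icc (0:ℝ) 1) : clmp t = t := by
  rw [clmp, min_eq_right h.2, max_eq_right h.1]

lemma clmp_mono : Monotone clmp := fun a b h => max_le_max le_rfl (min_le_min le_rfl h)

lemma clmp_cont : Continuous clmp := continuous_const.max (continuous_const.min continuous_id)

section

variable {f : ℝ → ℝ} {c : ℝ}

lemma c_le_half (hf : IsTradeoff f) (hc : c ∈ Icc (0:ℝ) 1) (hfc : f (1 - c) = c) :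
    c ≤ 1/2 := by
  have h := (hf.2.2.2 (1 - c) ⟨by linarith [hc.2], by linarith [hc.1]⟩).2
  linarith [hfc ▸ h]

lemma midf_bdd (hc2 : c ≤ 1/2) {t : ℝ} (h1 : -(1/2) ≤ t) (h2 : t ≤ 1/2) :
    c ≤ midf c t ∧ midf c t ≤ 1 - c := by
  unfold midf
  constructor
  · nlinarith [mul_nonneg (by linarith : (0:ℝ) ≤ 1 - 2*c) (by linarith : (0:ℝ) ≤ t + 1/2)]
  · nlinarith [mul_nonneg (by linarith : (0:ℝ) ≤ 1 - 2*c) (by linarith : (0:ℝ) ≤ 1/2 - t)]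

lemma midf_mono (hc2 : c ≤ 1/2) : Monotone (midf c) := by
  intro a b h
  unfold midf
  nlinarith [mul_nonneg (by linarith : (0:ℝ) ≤ 1 - 2*c) (by linarith : (0:ℝ) ≤ b - a)]

lemma GF_bounds (hf : IsTradeoff f) (hc : c ∈ Icc (0:ℝ) 1) (hfc : f (1 - c) = c) :
    ∀ n x, GF f c n x ∈ Icc (0:ℝ) 1 ∧ (x ≤ -(1/2) → GF f c n x ≤ c) ∧
      (x ≤ 1/2 → GF f c n x ≤ 1 - c) ∧ (-(1/2) ≤ x → c ≤ GF f c n x) ∧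
      ((1/2:ℝ) ≤ x → 1 - c ≤ GF f c n x) := by
  have hc2 : c ≤ 1/2 := c_le_half hf hc hfc
  intro n
  induction n with
  | zero =>
    intro x
    set t := max (-(1/2)) (min (1/2) x) with ht
    have ht1 : -(1/2) ≤ t := le_max_left _ _
    have ht2 : t ≤ 1/2 := max_le (by norm_num) (min_le_left _ _)
    have hb := midf_bdd hc2 ht1 ht2
    have hval : GF f c 0 x = midf c t := rfl
    refine ⟨⟨by linarith [hb.1, hc.1], by linarith [hb.2, hc.1]⟩, ?_, ?_, ?_, ?_⟩ <;>
      rw [hval]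
    · intro hx
      have : t = -(1/2) := by
        rw [ht, min_eq_right (by linarith), max_eq_left (by linarith)]
      rw [this]; unfold midf; norm_num
    · intro _; exact hb.2
    · intro _; exact hb.1
    · intro hx
      have : t = 1/2 := by
        rw [ht, min_eq_left (by linarith), max_eq_right (by norm_num)]
      rw [this]; unfold midf; norm_num
  | succ n ih =>
    intro x
    have hval : GF f c (n+1) x =
        if x ≤ -(1/2) then f (clmp (GF f c n (x+1)))
        else if x ≤ 1/2 then midf c x
        else 1 - f (clmp (1 - GF f c n (x-1))) := rfl
    rw [hval]
    split_ifs with h1 h2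
    · -- x ≤ -1/2
      obtain ⟨hu01, _, hu4, hu5, hu6⟩ := ih (x+1)
      have hcl : clmp (GF f c n (x+1)) = GF f c n (x+1) := clmp_eq hu01
      rw [hcl]
      have hmem := hf.2.2.2 _ hu01
      have hle : f (GF f c n (x+1)) ≤ c := by
        have := hf.2.2.1 hu01 (⟨by linarith [hc.2], by linarith [hc.1]⟩ : (1-c) ∈ Icc (0:ℝ) 1) (hu4 (by linarith))
        rwa [hfc] at this
      refine ⟨⟨hmem.1, by linarith [hmem.2, hu01.2]⟩, fun _ => hle, fun _ => by linarith,
        ?_, fun h => absurd h (by linarith)⟩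
      intro hx
      have hx' : x = -(1/2) := le_antisymm h1 hx
      have h12 : GF f c n (x+1) = 1 - c := by
        refine le_antisymm (hu4 (by rw [hx']; norm_num)) (hu6 (by rw [hx']; norm_num))
      rw [h12, hfc]
    · -- -1/2 < x ≤ 1/2
      have hb := midf_bdd hc2 (by linarith) h2
      refine ⟨⟨by linarith [hb.1, hc.1], by linarith [hb.2, hc.1]⟩,
        fun h => absurd h h1, fun _ => hb.2, fun _ => hb.1, ?_⟩
      intro hx
      have hx' : x = 1/2 := le_antisymm h2 hx
      rw [hx']; unfold midf; norm_num
    · -- x > 1/2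
      push_neg at h1 h2
      obtain ⟨hu01, _, _, hu5, _⟩ := ih (x-1)
      have hu : c ≤ GF f c n (x-1) := hu5 (by linarith)
      have h1u : (1 - GF f c n (x-1)) ∈ Icc (0:ℝ) 1 := ⟨by linarith [hu01.2], by linarith [hu01.1]⟩
      have hcl : clmp (1 - GF f c n (x-1)) = 1 - GF f c n (x-1) := clmp_eq h1u
      rw [hcl]
      have hmem := hf.2.2.2 _ h1u
      have hle : f (1 - GF f c n (x-1)) ≤ c := by
        have := hf.2.2.1 h1u (⟨by linarith [hc.2], by linarith [hc.1]⟩ : (1-c) ∈ Icc (0:ℝ) 1) (by linarith : 1 - GF f c n (x-1) ≤ 1 - c)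
        rwa [hfc] at this
      have hb1 : f (1 - GF f c n (x-1)) ≤ 1 := by linarith [hmem.2, hu01.1]
      refine ⟨⟨by linarith, by linarith [hmem.1]⟩,
        fun h => absurd h (by linarith), fun h => absurd h (by linarith),
        fun _ => by linarith, fun _ => by linarith⟩

end

section
variable {f : ℝ → ℝ} {c : ℝ}

lemma GF_half (hf : IsTradeoff f) (hc : c ∈ Icc (0:ℝ) 1) (hfc : f (1 - c) = c) (n : ℕ) :
    GF f c n (1/2) = 1 - c := by
  obtain ⟨_, _, h3, _, h5⟩ := GF_bounds hf hc hfc n (1/2)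
  exact le_antisymm (h3 le_rfl) (h5 le_rfl)

lemma GF_mhalf (hf : IsTradeoff f) (hc : c ∈ Icc (0:ℝ) 1) (hfc : f (1 - c) = c) (n : ℕ) :
    GF f c n (-(1/2)) = c := by
  obtain ⟨_, h2, _, h4, _⟩ := GF_bounds hf hc hfc n (-(1/2))
  exact le_antisymm (h2 le_rfl) (h4 le_rfl)

lemma GF_succ (n : ℕ) (x : ℝ) : GF f c (n+1) x =
    if x ≤ -(1/2) then f (clmp (GF f c n (x+1)))
    else if x ≤ 1/2 then midf c x
    else 1 - f (clmp (1 - GF f c n (x-1))) := rfl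

lemma GF_left {n : ℕ} {x : ℝ} (h : x ≤ -(1/2)) :
    GF f c (n+1) x = f (clmp (GF f c n (x+1))) := by
  rw [GF_succ, if_pos h]

lemma GF_mid {n : ℕ} {x : ℝ} (h1 : -(1/2) < x) (h2 : x ≤ 1/2) :
    GF f c (n+1) x = midf c x := by
  rw [GF_succ, if_neg (show ¬ (x ≤ -(1/2)) by linarith), if_pos h2]

lemma GF_right {n : ℕ} {x : ℝ} (h : 1/2 < x) :
    GF f c (n+1) x = 1 - f (clmp (1 - GF f c n (x-1))) := by
  rw [GF_succ, if_neg (show ¬ (x ≤ -(1/2)) by linarith), if_neg (show ¬ (x ≤ 1/2) by linarith)]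

lemma GF_zero (x : ℝ) : GF f c 0 x = midf c (max (-(1/2)) (min (1/2) x)) := rfl

lemma GF_zero' {x : ℝ} (h1 : -(1/2) ≤ x) (h2 : x ≤ 1/2) : GF f c 0 x = midf c x := by
  rw [GF_zero, min_eq_right h2, max_eq_right h1]

lemma GF_symm (hf : IsTradeoff f) (hc : c ∈ Icc (0:ℝ) 1) (hfc : f (1 - c) = c) :
    ∀ n x, GF f c n x = 1 - GF f c n (-x) := by
  have hval : ∀ n : ℕ, clmp (GF f c n (1/2)) = 1 - c := fun n => by
    rw [GF_half hf hc hfc, clmp_eq ⟨by linarith [hc.2], by linarith [hc.1]⟩]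
  intro n
  induction n with
  | zero =>
    intro x
    rw [GF_zero, GF_zero]
    rcases le_total x (-(1/2)) with h | h
    · rw [min_eq_right (show x ≤ (1/2:ℝ) by linarith), max_eq_left h,
        min_eq_left (show (1/2:ℝ) ≤ -x by linarith), max_eq_right (show (-(1/2):ℝ) ≤ 1/2 by norm_num)]
      unfold midf; ring
    · rcases le_total x (1/2) with h2 | h2
      · rw [min_eq_right h2, max_eq_right h, min_eq_right (show -x ≤ (1/2:ℝ) by linarith),
          max_eq_right (show (-(1/2):ℝ) ≤ -x by linarith)]
        unfold midf; ring
      · rw [min_eq_left h2, max_eq_right (show (-(1/2):ℝ) ≤ 1/2 by norm_num),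
          min_eq_right (show -x ≤ (1/2:ℝ) by linarith),
          max_eq_left (show -x ≤ (-(1/2):ℝ) by linarith)]
        unfold midf; ring
  | succ n ih =>
    intro x
    rcases le_or_gt x (-(1/2)) with h | h
    · rcases eq_or_lt_of_le h with he | hlt
      · subst he
        rw [GF_left (le_refl _), GF_mid (show (-(1/2):ℝ) < -(-(1/2)) by norm_num)
          (show -(-(1/2):ℝ) ≤ 1/2 by norm_num)]
        have e : (-(1/2) : ℝ) + 1 = 1/2 := by norm_num
        rw [e, hval n, hfc]
        have e2 : (-(-(1/2)) : ℝ) = 1/2 := by norm_num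
        rw [e2]; unfold midf; ring
      · rw [GF_left h, GF_right (show (1/2:ℝ) < -x by linarith)]
        have harg : 1 - GF f c n (-x - 1) = GF f c n (x+1) := by
          have h' := ih (x+1)
          have e : -(x+1) = -x - 1 := by ring
          rw [e] at h'
          linarith
        rw [harg]; ring
    · rcases le_or_gt x (1/2) with h2 | h2
      · rcases eq_or_lt_of_le h2 with he | hlt
        · subst he
          rw [GF_mid (show (-(1/2):ℝ) < 1/2 by norm_num) (le_refl _),
            GF_left (show (-(1/2):ℝ) ≤ -(1/2) by norm_num)]
          have e : (-(1/2) : ℝ) + 1 = 1/2 := by norm_num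
          rw [e, hval n, hfc]
          unfold midf; ring
        · rw [GF_mid h h2, GF_mid (show (-(1/2):ℝ) < -x by linarith) (show -x ≤ (1/2:ℝ) by linarith)]
          unfold midf; ring
      · rw [GF_right h2, GF_left (show -x ≤ (-(1/2):ℝ) by linarith)]
        have harg : GF f c n (-x + 1) = 1 - GF f c n (x - 1) := by
          have h' := ih (-x+1)
          have e : -(-x+1) = x - 1 := by ring
          rw [e] at h'
          exact h'
        rw [harg]

lemma GF_mono (hf : IsTradeoff f) (hc : c ∈ Icc (0:ℝ) 1) (hfc : f (1 - c) = c) :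
    ∀ n, Monotone (GF f c n) := by
  have hc2 : c ≤ 1/2 := c_le_half hf hc hfc
  intro n
  induction n with
  | zero =>
    intro a b hab
    exact midf_mono hc2 (max_le_max le_rfl (min_le_min le_rfl hab))
  | succ n ih =>
    intro a b hab
    rcases le_or_gt b (-(1/2)) with hb | hb
    · rw [GF_left (show a ≤ -(1/2) by linarith), GF_left hb]
      exact hf.2.2.1 (clmp_mem _) (clmp_mem _) (clmp_mono (ih (by linarith : a + 1 ≤ b + 1)))
    · rcases le_or_gt a (-(1/2)) with ha | ha
      · have h1 := (GF_bounds hf hc hfc (n+1) a).2.1 ha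
        have h2 := (GF_bounds hf hc hfc (n+1) b).2.2.2.1 hb.le
        linarith
      · rcases le_or_gt b (1/2) with hb2 | hb2
        · rw [GF_mid ha (show a ≤ 1/2 by linarith), GF_mid hb hb2]
          exact midf_mono hc2 hab
        · rcases le_or_gt a (1/2) with ha2 | ha2
          · have h1 := (GF_bounds hf hc hfc (n+1) a).2.2.1 ha2
            have h2 := (GF_bounds hf hc hfc (n+1) b).2.2.2.2 hb2.le
            linarith
          · rw [GF_right ha2, GF_right hb2]
            have : f (clmp (1 - GF f c n (b-1))) ≤ f (clmp (1 - GF f c n (a-1))) := by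
              refine hf.2.2.1 (clmp_mem _) (clmp_mem _) (clmp_mono ?_)
              have := ih (by linarith : a - 1 ≤ b - 1)
              linarith
            linarith

lemma GF_stab (hf : IsTradeoff f) (hc : c ∈ Icc (0:ℝ) 1) (hfc : f (1 - c) = c) :
    ∀ (n : ℕ) (x : ℝ), |x| ≤ (n : ℝ) + 1/2 → GF f c (n+1) x = GF f c n x := by
  intro n
  induction n with
  | zero =>
    intro x hx
    rw [abs_le] at hx
    push_cast at hx
    rcases le_or_gt x (-(1/2)) with h | h
    · have he : x = -(1/2) := le_antisymm h (by linarith [hx.1])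
      subst he
      rw [GF_left (le_refl _)]
      have e : (-(1/2) : ℝ) + 1 = 1/2 := by norm_num
      rw [e, GF_half hf hc hfc, clmp_eq ⟨by linarith [hc.2], by linarith [hc.1]⟩, hfc,
        GF_mhalf hf hc hfc]
    · rw [GF_mid h (by linarith [hx.2]), GF_zero' (by linarith) (by linarith [hx.2])]
  | succ n ih =>
    intro x hx
    rw [abs_le] at hx
    push_cast at hx
    rcases le_or_gt x (-(1/2)) with h | h
    · rw [GF_left h, GF_left h]
      have e : GF f c (n+1) (x+1) = GF f c n (x+1) := by
        apply ih
        rw [abs_le]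
        constructor
        · linarith [hx.1]
        · linarith
      rw [e]
    · rcases le_or_gt x (1/2) with h2 | h2
      · rw [GF_mid h h2, GF_mid h h2]
      · rw [GF_right h2, GF_right h2]
        have e : GF f c (n+1) (x-1) = GF f c n (x-1) := by
          apply ih
          rw [abs_le]
          constructor
          · linarith
          · linarith [hx.2]
        rw [e]

lemma GF_stab' (hf : IsTradeoff f) (hc : c ∈ Icc (0:ℝ) 1) (hfc : f (1 - c) = c) :
    ∀ (k n : ℕ) (x : ℝ), |x| ≤ (n : ℝ) + 1/2 → GF f c (n+k) x = GF f c n x := by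
  intro k
  induction k with
  | zero => intro n x _; rfl
  | succ k ih =>
    intro n x hx
    have h1 : GF f c (n+k+1) x = GF f c (n+k) x := by
      apply GF_stab hf hc hfc
      refine le_trans hx ?_
      push_cast
      linarith [Nat.cast_nonneg (α := ℝ) k]
    have e : n + (k+1) = (n+k)+1 := by ring
    rw [e, h1, ih n x hx]

lemma FF_agree (hf : IsTradeoff f) (hc : c ∈ Icc (0:ℝ) 1) (hfc : f (1 - c) = c)
    {n : ℕ} {x : ℝ} (hx : |x| ≤ (n : ℝ) + 1/2) : FF f c x = GF f c n x := by
  set m := ⌈|x|⌉₊ with hm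
  have hxm : |x| ≤ (m:ℝ) + 1/2 := le_trans (Nat.le_ceil _) (by linarith)
  show GF f c m x = GF f c n x
  rcases le_total m n with h | h
  · have h' := GF_stab' hf hc hfc (n - m) m x hxm
    rw [Nat.add_sub_cancel' h] at h'
    exact h'.symm
  · have h' := GF_stab' hf hc hfc (m - n) n x hx
    rwa [Nat.add_sub_cancel' h] at h'


lemma GF_cont (hf : IsTradeoff f) (hc : c ∈ Icc (0:ℝ) 1) (hfc : f (1 - c) = c) :
    ∀ n, Continuous (GF f c n) := by
  have hfcl : Continuous (fun t : ℝ => f (clmp t)) :=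
    hf.2.1.comp_continuous clmp_cont clmp_mem
  have hmid : Continuous (midf c) := by
    unfold midf
    exact (continuous_const.mul (continuous_const.sub continuous_id)).add
      (continuous_const.mul (continuous_id.add continuous_const))
  intro n
  induction n with
  | zero =>
    exact hmid.comp (continuous_const.max (continuous_const.min continuous_id))
  | succ n ih =>
    have hA : Continuous (fun x : ℝ => f (clmp (GF f c n (x+1)))) :=
      hfcl.comp (ih.comp (continuous_id.add continuous_const))
    have hC : Continuous (fun x : ℝ => 1 - f (clmp (1 - GF f c n (x-1)))) :=
      continuous_const.sub (hfcl.comp (continuous_const.sub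
        (ih.comp (continuous_id.sub continuous_const))))
    have hB : Continuous (fun x : ℝ =>
        if x ≤ 1/2 then midf c x else 1 - f (clmp (1 - GF f c n (x-1)))) := by
      refine Continuous.if_le hmid hC continuous_id continuous_const ?_
      intro x hx
      rw [hx]
      have e : (1/2 : ℝ) - 1 = -(1/2) := by norm_num
      rw [e, GF_mhalf hf hc hfc, clmp_eq ⟨by linarith [hc.2], by linarith [hc.1]⟩, hfc]
      unfold midf; ring
    have key : Continuous (fun x : ℝ =>
        if x ≤ -(1/2) then f (clmp (GF f c n (x+1)))
        else if x ≤ 1/2 then midf c x else 1 - f (clmp (1 - GF f c n (x-1)))) := by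
      refine Continuous.if_le hA hB continuous_id continuous_const ?_
      intro x hx
      rw [hx]
      have e : (-(1/2) : ℝ) + 1 = 1/2 := by norm_num
      rw [e, GF_half hf hc hfc, clmp_eq ⟨by linarith [hc.2], by linarith [hc.1]⟩, hfc,
        if_pos (show (-(1/2):ℝ) ≤ 1/2 by norm_num)]
      unfold midf; ring
    have e : GF f c (n+1) = fun x : ℝ =>
        if x ≤ -(1/2) then f (clmp (GF f c n (x+1)))
        else if x ≤ 1/2 then midf c x else 1 - f (clmp (1 - GF f c n (x-1))) :=
      funext fun x => GF_succ n x
    rw [e]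
    exact key

lemma FF_mem (hf : IsTradeoff f) (hc : c ∈ Icc (0:ℝ) 1) (hfc : f (1 - c) = c) (x : ℝ) :
    FF f c x ∈ Icc (0:ℝ) 1 := (GF_bounds hf hc hfc _ x).1

lemma FF_mid (hf : IsTradeoff f) (hc : c ∈ Icc (0:ℝ) 1) (hfc : f (1 - c) = c)
    {x : ℝ} (hx : x ∈ Icc (-(1/2) : ℝ) (1/2)) : FF f c x = midf c x := by
  have h : |x| ≤ ((0:ℕ):ℝ) + 1/2 := by
    rw [abs_le]; push_cast; exact ⟨by linarith [hx.1], by linarith [hx.2]⟩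
  rw [FF_agree hf hc hfc h, GF_zero' hx.1 hx.2]

lemma FF_left (hf : IsTradeoff f) (hc : c ∈ Icc (0:ℝ) 1) (hfc : f (1 - c) = c)
    {x : ℝ} (hx : x ≤ -(1/2)) : FF f c x = f (FF f c (x+1)) := by
  set n := ⌈|x|⌉₊ with hn
  have h1 : |x| ≤ (n:ℝ) + 1/2 := le_trans (Nat.le_ceil _) (by linarith)
  have h1' := abs_le.1 h1
  have h2 : |x+1| ≤ (n:ℝ) + 1/2 := by
    rw [abs_le]
    constructor
    · linarith [h1'.1]
    · linarith [Nat.cast_nonneg (α := ℝ) n]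
  have h3 : |x| ≤ ((n+1:ℕ):ℝ) + 1/2 := by push_cast; linarith
  calc FF f c x = GF f c (n+1) x := FF_agree hf hc hfc h3
    _ = f (clmp (GF f c n (x+1))) := GF_left hx
    _ = f (clmp (FF f c (x+1))) := by rw [FF_agree hf hc hfc h2]
    _ = f (FF f c (x+1)) := by rw [clmp_eq (FF_mem hf hc hfc (x+1))]

lemma FF_right (hf : IsTradeoff f) (hc : c ∈ Icc (0:ℝ) 1) (hfc : f (1 - c) = c)
    {x : ℝ} (hx : 1/2 < x) : FF f c x = 1 - f (1 - FF f c (x-1)) := by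
  set n := ⌈|x|⌉₊ with hn
  have h1 : |x| ≤ (n:ℝ) + 1/2 := le_trans (Nat.le_ceil _) (by linarith)
  have h1' := abs_le.1 h1
  have h2 : |x-1| ≤ (n:ℝ) + 1/2 := by
    rw [abs_le]
    constructor
    · have := Nat.cast_nonneg (α := ℝ) n; linarith
    · linarith [h1'.2]
  have h3 : |x| ≤ ((n+1:ℕ):ℝ) + 1/2 := by push_cast; linarith
  have hmem := FF_mem hf hc hfc (x-1)
  calc FF f c x = GF f c (n+1) x := FF_agree hf hc hfc h3
    _ = 1 - f (clmp (1 - GF f c n (x-1))) := GF_right hx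
    _ = 1 - f (clmp (1 - FF f c (x-1))) := by rw [FF_agree hf hc hfc h2]
    _ = 1 - f (1 - FF f c (x-1)) := by
        rw [clmp_eq ⟨by linarith [hmem.2], by linarith [hmem.1]⟩]

lemma FF_symm (hf : IsTradeoff f) (hc : c ∈ Icc (0:ℝ) 1) (hfc : f (1 - c) = c) (x : ℝ) :
    FF f c x = 1 - FF f c (-x) := by
  show GF f c ⌈|x|⌉₊ x = 1 - GF f c ⌈|(-x)|⌉₊ (-x)
  rw [abs_neg]
  exact GF_symm hf hc hfc _ x

lemma FF_mono (hf : IsTradeoff f) (hc : c ∈ Icc (0:ℝ) 1) (hfc : f (1 - c) = c) :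
    Monotone (FF f c) := by
  intro a b hab
  set n := ⌈max |a| |b|⌉₊ with hn
  have hle := Nat.le_ceil (max |a| |b|)
  have hna : |a| ≤ (n:ℝ) + 1/2 := le_trans (le_max_left _ _) (le_trans hle (by linarith))
  have hnb : |b| ≤ (n:ℝ) + 1/2 := le_trans (le_max_right _ _) (le_trans hle (by linarith))
  rw [FF_agree hf hc hfc hna, FF_agree hf hc hfc hnb]
  exact GF_mono hf hc hfc n hab

lemma FF_cont (hf : IsTradeoff f) (hc : c ∈ Icc (0:ℝ) 1) (hfc : f (1 - c) = c) :
    Continuous (FF f c) := by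
  rw [continuous_iff_continuousAt]
  intro x
  set n := ⌈|x| + 1⌉₊ with hn
  have hx : |x| < (n:ℝ) + 1/2 := by
    have := Nat.le_ceil (|x| + 1)
    rw [← hn] at this
    linarith
  have hU : IsOpen {y : ℝ | |y| < (n:ℝ) + 1/2} := isOpen_lt continuous_abs continuous_const
  have hmem : {y : ℝ | |y| < (n:ℝ) + 1/2} ∈ nhds x := hU.mem_nhds hx
  refine ((GF_cont hf hc hfc n).continuousAt).congr ?_
  exact Filter.eventuallyEq_of_mem hmem (fun y hy => (FF_agree hf hc hfc (le_of_lt hy)).symm)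

lemma f_lt (hf : IsTradeoff f) (hnt : ∃ α ∈ Ioo (0:ℝ) 1, f α < α)
    {L : ℝ} (h0 : 0 < L) (h1 : L < 1) : f L < L := by
  obtain ⟨a, ⟨ha0, ha1⟩, hlt⟩ := hnt
  have hf0 : f 0 = 0 :=
    le_antisymm (hf.2.2.2 0 ⟨le_rfl, zero_le_one⟩).2 (hf.2.2.2 0 ⟨le_rfl, zero_le_one⟩).1
  rcases le_or_gt L a with h | h
  · set t := L / a with ht
    have htpos : 0 < t := div_pos h0 ha0
    have ht1 : t ≤ 1 := (div_le_one ha0).2 h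
    have hta : t * a = L := by
      rw [ht]; exact div_mul_cancel₀ L ha0.ne'
    have hcomb : (1 - t) • (0:ℝ) + t • a = L := by
      simp only [smul_eq_mul, mul_zero, zero_add]; exact hta
    have key := hf.1.2 (x := 0) ⟨le_rfl, zero_le_one⟩ (y := a) ⟨ha0.le, ha1.le⟩
      (by linarith : (0:ℝ) ≤ 1 - t) htpos.le (by ring)
    rw [hcomb] at key
    simp only [smul_eq_mul, hf0, mul_zero] at key
    have : t * f a < t * a := mul_lt_mul_of_pos_left hlt htpos
    linarith
  · set s := (1 - L) / (1 - a) with hs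
    have hspos : 0 < s := div_pos (by linarith) (by linarith)
    have hs1 : s < 1 := (div_lt_one (by linarith)).2 (by linarith)
    have hsa : s * (1 - a) = 1 - L := by
      rw [hs]; exact div_mul_cancel₀ _ (by linarith : (1:ℝ) - a ≠ 0)
    have hcomb : s • a + (1 - s) • (1:ℝ) = L := by
      simp only [smul_eq_mul, mul_one]
      linear_combination -hsa
    have key := hf.1.2 (x := a) ⟨ha0.le, ha1.le⟩ (y := 1) ⟨zero_le_one, le_rfl⟩
      hspos.le (by linarith : (0:ℝ) ≤ 1 - s) (by ring)
    rw [hcomb] at key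
    simp only [smul_eq_mul, mul_one] at key
    have hf1 : f 1 ≤ 1 := (hf.2.2.2 1 ⟨zero_le_one, le_rfl⟩).2
    have h2 : s * f a < s * a := mul_lt_mul_of_pos_left hlt hspos
    have h3 : (1 - s) * f 1 ≤ (1 - s) * 1 := by nlinarith
    have he : s * a + (1 - s) * 1 = L := by linear_combination -hsa
    nlinarith

lemma FF_atBot (hf : IsTradeoff f) (hc : c ∈ Icc (0:ℝ) 1) (hfc : f (1 - c) = c)
    (hnt : ∃ α ∈ Ioo (0:ℝ) 1, f α < α) : Tendsto (FF f c) atBot (nhds 0) := by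
  have hc2 : c ≤ 1/2 := c_le_half hf hc hfc
  set a : ℕ → ℝ := fun n => FF f c (-(1/2) - n) with ha
  have hmem : ∀ x, FF f c x ∈ Icc (0:ℝ) 1 := FF_mem hf hc hfc
  have hrec : ∀ n : ℕ, a (n+1) = f (a n) := by
    intro n
    have hxle : (-(1/2) - ((n:ℝ)+1)) ≤ -(1/2) := by linarith [Nat.cast_nonneg (α := ℝ) n]
    have h2 := FF_left hf hc hfc hxle
    have e : (-(1/2) - ((n:ℝ)+1)) + 1 = -(1/2) - n := by ring
    rw [e] at h2
    show FF f c (-(1/2) - ((n:ℕ)+1:ℕ)) = f (FF f c (-(1/2) - n))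
    push_cast
    exact h2
  have hanti : Antitone a := antitone_nat_of_succ_le fun n => by
    rw [hrec n]; exact (hf.2.2.2 _ (hmem _)).2
  have hbdd : BddBelow (Set.range a) := ⟨0, by rintro y ⟨n, rfl⟩; exact (hmem _).1⟩
  have hL : Tendsto a atTop (nhds (⨅ n, a n)) := tendsto_atTop_ciInf hanti hbdd
  set L := ⨅ n, a n with hLdef
  have hL0 : 0 ≤ L := le_ciInf fun n => (hmem _).1
  have ha0 : a 0 = c := by
    show FF f c (-(1/2) - ((0:ℕ):ℝ)) = c
    push_cast
    rw [show (-(1/2) : ℝ) - 0 = -(1/2) by ring,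
      FF_mid hf hc hfc ⟨le_rfl, by norm_num⟩]
    unfold midf; ring
  have hLc : L ≤ c := by
    have := ciInf_le hbdd 0
    rw [ha0] at this
    exact this
  have hfL : f L = L := by
    have h1 : Tendsto (fun n => a (n+1)) atTop (nhds L) := hL.comp (tendsto_add_atTop_nat 1)
    have hcw : ContinuousWithinAt f (Icc 0 1) L := hf.2.1 L ⟨hL0, by linarith⟩
    have h2 : Tendsto (fun n => f (a n)) atTop (nhds (f L)) :=
      hcw.tendsto.comp (tendsto_nhdsWithin_of_tendsto_nhds_of_eventually_within a hL
        (Filter.Eventually.of_forall fun n => hmem _))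
    have he : (fun n => f (a n)) = fun n => a (n+1) := funext fun n => (hrec n).symm
    rw [he] at h2
    exact tendsto_nhds_unique h2 h1
  have hLzero : L = 0 := by
    by_contra hne
    have hpos : 0 < L := lt_of_le_of_ne hL0 (Ne.symm hne)
    exact absurd hfL (ne_of_lt (f_lt hf hnt hpos (by linarith)))
  rw [hLzero] at hL
  rw [tendsto_order]
  constructor
  · intro b hb
    exact Filter.Eventually.of_forall fun x => lt_of_lt_of_le hb (hmem x).1
  · intro b hb
    have hev : ∀ᶠ n in atTop, a n < b := hL.eventually (gt_mem_nhds hb)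
    obtain ⟨N, hN⟩ := hev.exists
    rw [Filter.eventually_atBot]
    exact ⟨-(1/2) - N, fun x hx => lt_of_le_of_lt (FF_mono hf hc hfc hx) hN⟩

lemma FF_atTop (hf : IsTradeoff f) (hc : c ∈ Icc (0:ℝ) 1) (hfc : f (1 - c) = c)
    (hnt : ∃ α ∈ Ioo (0:ℝ) 1, f α < α) : Tendsto (FF f c) atTop (nhds 1) := by
  have h0 := FF_atBot hf hc hfc hnt
  have he : FF f c = fun x => 1 - FF f c (-x) := funext (FF_symm hf hc hfc)
  rw [he]
  have h1 : Tendsto (fun x : ℝ => FF f c (-x)) atTop (nhds 0) :=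
    h0.comp tendsto_neg_atTop_atBot
  simpa using tendsto_const_nhds.sub h1

end

theorem stmt6 (f : ℝ → ℝ) (c : ℝ)
    (hf : IsTradeoff f) (hsymm : IsSymmTradeoff f) (hnt : Nontrivial' f)
    (hc : c ∈ Icc (0:ℝ) 1) (hfc : f (1 - c) = c) :
    ∃! F : ℝ → ℝ,
      (∀ x : ℝ, x < -(1/2) → F x = f (F (x + 1))) ∧
      (∀ x ∈ Icc (-(1/2) : ℝ) (1/2), F x = c * (1/2 - x) + (1 - c) * (x + 1/2)) ∧
      (∀ x : ℝ, (1/2 : ℝ) < x → F x = 1 - f (1 - F (x - 1))) ∧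
      Continuous F ∧ Monotone F ∧
      Tendsto F atBot (nhds 0) ∧ Tendsto F atTop (nhds 1) ∧
      (∀ x : ℝ, F x = 1 - F (-x)) := by

  refine ⟨FF f c, ⟨?_, ?_, ?_, ?_, ?_, ?_, ?_, ?_⟩, ?_⟩
  · intro x hx
    exact FF_left hf hc hfc (le_of_lt hx)
  · intro x hx
    rw [FF_mid hf hc hfc hx]
    rfl
  · intro x hx
    exact FF_right hf hc hfc hx
  · exact FF_cont hf hc hfc
  · exact FF_mono hf hc hfc
  · exact FF_atBot hf hc hfc hnt
  · exact FF_atTop hf hc hfc hnt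
  · exact FF_symm hf hc hfc
  · rintro F' ⟨h1, h2, h3, -, -, -, -, -⟩
    have key : ∀ (n : ℕ) (x : ℝ), |x| ≤ (n:ℝ) + 1/2 → F' x = FF f c x := by
      intro n
      induction n with
      | zero =>
        intro x hx
        rw [abs_le] at hx
        push_cast at hx
        have hxm : x ∈ Icc (-(1/2) : ℝ) (1/2) := ⟨by linarith [hx.1], by linarith [hx.2]⟩
        rw [h2 x hxm, FF_mid hf hc hfc hxm]
        rfl
      | succ n ih =>
        intro x hx
        rw [abs_le] at hx
        push_cast at hx
        rcases lt_or_ge x (-(1/2)) with h | h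
        · rw [h1 x h, FF_left hf hc hfc h.le,
            ih (x+1) (abs_le.2 ⟨by linarith [hx.1], by linarith [Nat.cast_nonneg (α := ℝ) n]⟩)]
        · rcases le_or_gt x (1/2) with h2' | h2'
          · have hxm : x ∈ Icc (-(1/2) : ℝ) (1/2) := ⟨h, h2'⟩
            rw [h2 x hxm, FF_mid hf hc hfc hxm]
            rfl
          · rw [h3 x h2', FF_right hf hc hfc h2',
              ih (x-1) (abs_le.2 ⟨by linarith [Nat.cast_nonneg (α := ℝ) n], by linarith [hx.2]⟩)]
    funext x
    exact key ⌈|x|⌉₊ x (le_trans (Nat.le_ceil _) (by linarith))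
end

section
/- The total variation distance between two shifted multivariate uniform distributions satisfies: if X ∼ U(−1/(2δ), 1/(2δ))^d and v ∈ ℝ^d with |v_i| ≤ 1/δ for all i, then TV(X, X + v) = 1 − ∏_{i=1}^d (1 − δ|v_i|). -/
open MeasureTheory Real Set Filter

/-- Uniform probability measure on the interval `(a,b)`. -/
noncomputable def unif (a b : ℝ) : Measure ℝ :=
  (ENNReal.ofReal (b - a))⁻¹ • volume.restrict (Ioo a b)

/-- A nonnegative log-concave function on `ℝ`. -/
def LogConcaveFn (g : ℝ → ℝ) : Prop :=
  (∀ x, 0 ≤ g x) ∧ ∀ x y θ : ℝ, 0 ≤ θ → θ ≤ 1 →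
    g x ^ θ * g y ^ (1 - θ) ≤ g (θ * x + (1 - θ) * y)

/-- Total variation distance `sup_A |P(A) - Q(A)|`. -/
noncomputable def tvDist {Ω : Type*} [MeasurableSpace Ω] (P Q : Measure Ω) : ℝ :=
  ⨆ A : {A : Set Ω // MeasurableSet A}, |(P A.1).toReal - (Q A.1).toReal|

namespace Stmt13Aux

lemma unif_apply (a b : ℝ) (S : Set ℝ) :
    unif a b S = (ENNReal.ofReal (b - a))⁻¹ * volume (S ∩ Ioo a b) := by
  simp [unif, Measure.smul_apply, Measure.restrict_apply' measurableSet_Ioo, smul_eq_mul]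

lemma unif_Ioo (a b s t : ℝ) (hs : a ≤ s) (ht : t ≤ b) :
    unif a b (Ioo s t) = (ENNReal.ofReal (b - a))⁻¹ * ENNReal.ofReal (t - s) := by
  rw [unif_apply, inter_eq_left.mpr (Ioo_subset_Ioo hs ht), Real.volume_Ioo]

lemma unif_prob (a b : ℝ) (h : a < b) : IsProbabilityMeasure (unif a b) := by
  constructor
  rw [unif_apply, univ_inter, Real.volume_Ioo,
    ENNReal.inv_mul_cancel (by simp [sub_pos.mpr h, h]) ENNReal.ofReal_ne_top]

lemma unif_map (a b m : ℝ) : (unif a b).map (· + m) = unif (a + m) (b + m) := by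
  ext S hS
  rw [Measure.map_apply (measurable_add_const m) hS, unif_apply, unif_apply]
  have h1 : Ioo a b = (· + m) ⁻¹' Ioo (a + m) (b + m) := by
    rw [preimage_add_const_Ioo]; simp
  rw [h1, ← preimage_inter, measure_preimage_add_right]
  congr 2 <;> ring

lemma unif_restrict (a b : ℝ) {t : Set ℝ} (ht : MeasurableSet t) (hsub : t ⊆ Ioo a b) :
    (unif a b).restrict t = (ENNReal.ofReal (b - a))⁻¹ • volume.restrict t := by
  rw [unif, Measure.restrict_smul, Measure.restrict_restrict ht,
    inter_eq_left.mpr hsub]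

lemma restrict_pi_pi {ι : Type*} [Fintype ι] (ν : ι → Measure ℝ)
    [∀ i, IsFiniteMeasure (ν i)] (t : ι → Set ℝ) (ht : ∀ i, MeasurableSet (t i)) :
    (Measure.pi ν).restrict (univ.pi t) = Measure.pi (fun i => (ν i).restrict (t i)) := by
  refine (Measure.pi_eq fun s hs => ?_).symm
  rw [Measure.restrict_apply (MeasurableSet.univ_pi hs), ← pi_inter_distrib,
    Measure.pi_pi]
  congr 1
  ext i
  rw [Measure.restrict_apply (hs i)]

end Stmt13Aux

theorem stmt13 (d : ℕ) (δ : ℝ) (hδ0 : 0 < δ) (hδ1 : δ ≤ 1)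
    (v : Fin d → ℝ) (hv : ∀ i, |v i| ≤ 1/δ) :
    tvDist (Measure.pi fun _ : Fin d => unif (-(1/(2*δ))) (1/(2*δ)))
        ((Measure.pi fun _ : Fin d => unif (-(1/(2*δ))) (1/(2*δ))).map (· + v))
      = 1 - ∏ i : Fin d, (1 - δ * |v i|) := by
  classical
  set c : ℝ := 1/(2*δ) with hc
  have hcpos : 0 < c := by positivity
  have hlen : c - (-c) = 1/δ := by rw [hc]; ring
  set μ : Measure ℝ := unif (-c) c with hμ
  haveI hμprob : IsProbabilityMeasure μ := Stmt13Aux.unif_prob _ _ (by linarith)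
  set P : Measure (Fin d → ℝ) := Measure.pi (fun _ : Fin d => μ) with hP
  haveI : IsProbabilityMeasure P := by
    constructor
    rw [hP, ← Set.pi_univ univ, Measure.pi_pi]
    simp
  have hf : Measurable (fun x : Fin d → ℝ => x + v) :=
    measurable_pi_lambda _ fun i => by fun_prop
  set Q : Measure (Fin d → ℝ) := P.map (· + v) with hQ
  haveI : IsProbabilityMeasure Q := Measure.isProbabilityMeasure_map hf.aemeasurable
  -- intervals
  set I : Set ℝ := Ioo (-c) c with hI
  set J : Fin d → Set ℝ := fun i => Ioo (-c + v i) (c + v i) with hJ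
  set O : Fin d → Set ℝ := fun i => I ∩ J i with hO
  have hOmeas : ∀ i, MeasurableSet (O i) := fun i =>
    measurableSet_Ioo.inter measurableSet_Ioo
  have hOsubI : ∀ i, O i ⊆ I := fun i => inter_subset_left
  have hOsubJ : ∀ i, O i ⊆ J i := fun i => inter_subset_right
  set Ω : Set (Fin d → ℝ) := univ.pi O with hΩ
  have hΩmeas : MeasurableSet Ω := MeasurableSet.univ_pi hOmeas
  -- per-coordinate bounds on the factors
  have hδv : ∀ i, δ * |v i| ≤ 1 := by
    intro i
    calc δ * |v i| ≤ δ * (1/δ) := by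
          exact mul_le_mul_of_nonneg_left (hv i) hδ0.le
      _ = 1 := by field_simp
  have hfac0 : ∀ i, 0 ≤ 1 - δ * |v i| := fun i => by linarith [hδv i]
  have hfac1 : ∀ i, 1 - δ * |v i| ≤ 1 := fun i =>
    by nlinarith [abs_nonneg (v i), hδ0.le]
  have hprod0 : 0 ≤ ∏ i : Fin d, (1 - δ * |v i|) :=
    Finset.prod_nonneg fun i _ => hfac0 i
  have hprod1 : ∏ i : Fin d, (1 - δ * |v i|) ≤ 1 :=
    Finset.prod_le_one (fun i _ => hfac0 i) (fun i _ => hfac1 i)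
  -- measure of each O i
  have hμO : ∀ i, μ (O i) = ENNReal.ofReal (1 - δ * |v i|) := by
    intro i
    have h1 : O i = Ioo (max (-c) (-c + v i)) (min c (c + v i)) := by
      simp only [hO, hI, hJ]; rw [Ioo_inter_Ioo]
    have h2 : min c (c + v i) - max (-c) (-c + v i) = (c - (-c)) - |v i| := by
      rcases abs_cases (v i) with ⟨h, h'⟩ | ⟨h, h'⟩
      · rw [h, max_eq_right (by linarith), min_eq_left (by linarith)]; ring
      · rw [h, max_eq_left (by linarith), min_eq_right (by linarith)]; ring
    rw [hμ, h1, Stmt13Aux.unif_Ioo _ _ _ _ (le_max_left _ _) (min_le_left _ _), h2, hlen]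
    have hδinv : (ENNReal.ofReal (1/δ))⁻¹ = ENNReal.ofReal δ := by
      rw [← ENNReal.ofReal_inv_of_pos (by positivity)]
      norm_num
    rw [hδinv, ← ENNReal.ofReal_mul hδ0.le]
    congr 1
    field_simp
  -- Q as a product measure
  have hQpi : Q = Measure.pi (fun i => μ.map (· + v i)) := by
    haveI : ∀ i : Fin d, IsProbabilityMeasure (μ.map (· + v i)) := fun i =>
      Measure.isProbabilityMeasure_map (measurable_add_const (v i)).aemeasurable
    refine (Measure.pi_eq fun s hs => ?_).symm
    rw [hQ, Measure.map_apply hf (MeasurableSet.univ_pi hs)]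
    have hpre : (· + v) ⁻¹' (univ.pi s) = univ.pi (fun i => (· + v i) ⁻¹' s i) := by
      ext x; simp [Set.mem_pi, Pi.add_apply]
    rw [hpre, hP, Measure.pi_pi]
    exact Finset.prod_congr rfl fun i _ =>
      (Measure.map_apply (measurable_add_const (v i)) (hs i)).symm
  -- restricted measures agree on Ω
  have hμmap : ∀ i, μ.map (· + v i) = unif (-c + v i) (c + v i) := fun i =>
    Stmt13Aux.unif_map (-c) c (v i)
  have hrestr : P.restrict Ω = Q.restrict Ω := by
    haveI : ∀ i : Fin d, IsProbabilityMeasure (μ.map (· + v i)) := fun i =>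
      Measure.isProbabilityMeasure_map (measurable_add_const (v i)).aemeasurable
    rw [hP, hQpi, hΩ, Stmt13Aux.restrict_pi_pi _ _ hOmeas,
      Stmt13Aux.restrict_pi_pi _ _ hOmeas]
    congr 1
    ext1 i
    rw [hμmap i, hμ, Stmt13Aux.unif_restrict _ _ (hOmeas i) (hOsubI i),
      Stmt13Aux.unif_restrict _ _ (hOmeas i) (hOsubJ i)]
    congr 2
    ring
  have hkey : ∀ A : Set (Fin d → ℝ), MeasurableSet A → P (A ∩ Ω) = Q (A ∩ Ω) := by
    intro A hA
    have := congrArg (fun m : Measure (Fin d → ℝ) => m A) hrestr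
    simpa [Measure.restrict_apply hA] using this
  -- measure of Ω
  have hPΩ : P Ω = ENNReal.ofReal (∏ i : Fin d, (1 - δ * |v i|)) := by
    rw [hP, hΩ, Measure.pi_pi]
    rw [ENNReal.ofReal_prod_of_nonneg (fun i _ => hfac0 i)]
    exact Finset.prod_congr rfl fun i _ => hμO i
  have hPΩr : (P Ω).toReal = ∏ i : Fin d, (1 - δ * |v i|) := by
    rw [hPΩ, ENNReal.toReal_ofReal hprod0]
  have hQΩ : Q Ω = P Ω := by
    have := hkey univ MeasurableSet.univ
    simpa using this.symm
  -- complement bounds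
  have hPΩc : (P Ωᶜ).toReal = 1 - ∏ i : Fin d, (1 - δ * |v i|) := by
    rw [prob_compl_eq_one_sub hΩmeas,
      ENNReal.toReal_sub_of_le prob_le_one ENNReal.one_ne_top, hPΩr]
    simp
  have hQΩc : (Q Ωᶜ).toReal = 1 - ∏ i : Fin d, (1 - δ * |v i|) := by
    rw [prob_compl_eq_one_sub hΩmeas, hQΩ,
      ENNReal.toReal_sub_of_le prob_le_one ENNReal.one_ne_top, hPΩr]
    simp
  -- the per-set upper bound
  have hupper : ∀ A : Set (Fin d → ℝ), MeasurableSet A →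
      |(P A).toReal - (Q A).toReal| ≤ 1 - ∏ i : Fin d, (1 - δ * |v i|) := by
    intro A hA
    have h1 : P A ≤ Q A + P Ωᶜ := by
      calc P A = P (A ∩ Ω) + P (A \ Ω) := (measure_inter_add_diff A hΩmeas).symm
        _ = Q (A ∩ Ω) + P (A \ Ω) := by rw [hkey A hA]
        _ ≤ Q A + P Ωᶜ := add_le_add (measure_mono inter_subset_left)
            (measure_mono (diff_subset_compl A Ω))
    have h2 : Q A ≤ P A + Q Ωᶜ := by
      calc Q A = Q (A ∩ Ω) + Q (A \ Ω) := (measure_inter_add_diff A hΩmeas).symm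
        _ = P (A ∩ Ω) + Q (A \ Ω) := by rw [hkey A hA]
        _ ≤ P A + Q Ωᶜ := add_le_add (measure_mono inter_subset_left)
            (measure_mono (diff_subset_compl A Ω))
    have h1r : (P A).toReal ≤ (Q A).toReal + (P Ωᶜ).toReal := by
      rw [← ENNReal.toReal_add (measure_ne_top _ _) (measure_ne_top _ _)]
      exact ENNReal.toReal_mono
        (ENNReal.add_ne_top.mpr ⟨measure_ne_top _ _, measure_ne_top _ _⟩) h1
    have h2r : (Q A).toReal ≤ (P A).toReal + (Q Ωᶜ).toReal := by
      rw [← ENNReal.toReal_add (measure_ne_top _ _) (measure_ne_top _ _)]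
      exact ENNReal.toReal_mono
        (ENNReal.add_ne_top.mpr ⟨measure_ne_top _ _, measure_ne_top _ _⟩) h2
    rw [abs_sub_le_iff]
    constructor <;> [skip; skip]
    · rw [hPΩc] at h1r; linarith
    · rw [hQΩc] at h2r; linarith
  -- the witness set
  set B : Set (Fin d → ℝ) := univ.pi (fun _ => I) with hB
  set Bv : Set (Fin d → ℝ) := univ.pi J with hBv
  have hBmeas : MeasurableSet B := MeasurableSet.univ_pi fun _ => measurableSet_Ioo
  have hBvmeas : MeasurableSet Bv := MeasurableSet.univ_pi fun _ => measurableSet_Ioo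
  set A₀ : Set (Fin d → ℝ) := B \ Bv with hA₀
  have hA₀meas : MeasurableSet A₀ := hBmeas.diff hBvmeas
  have hPB : P B = 1 := by
    rw [hP, hB, Measure.pi_pi]
    have : μ I = 1 := by
      rw [hμ, hI, Stmt13Aux.unif_Ioo _ _ _ _ le_rfl le_rfl,
        ENNReal.inv_mul_cancel (by simp [hlen]; positivity) ENNReal.ofReal_ne_top]
    simp [this]
  have hBO : B ∩ Bv = Ω := by
    rw [hB, hBv, hΩ, ← pi_inter_distrib]
  have hPA₀ : (P A₀).toReal = 1 - ∏ i : Fin d, (1 - δ * |v i|) := by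
    have : A₀ = B \ (B ∩ Bv) := by rw [hA₀, diff_self_inter]
    rw [this, hBO, measure_diff (by rw [← hBO]; exact inter_subset_left) hΩmeas.nullMeasurableSet
      (measure_ne_top _ _), hPB,
      ENNReal.toReal_sub_of_le (by rw [← hPB] at *; exact measure_mono (by rw [← hBO]; exact inter_subset_left)) ENNReal.one_ne_top, hPΩr]
    simp
  have hQA₀ : Q A₀ = 0 := by
    rw [hQ, Measure.map_apply hf hA₀meas]
    have hpreBv : (· + v) ⁻¹' Bv = B := by
      ext x
      simp only [hBv, hB, Set.mem_preimage, Set.mem_pi, Set.mem_univ, true_implies]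
      refine forall_congr' fun i => ?_
      simp only [hJ, hI, Pi.add_apply, Set.mem_Ioo]
      constructor
      · rintro ⟨h1, h2⟩; constructor <;> linarith
      · rintro ⟨h1, h2⟩; constructor <;> linarith
    have hsub : (· + v) ⁻¹' A₀ ⊆ Bᶜ := by
      rw [hA₀, preimage_diff, hpreBv]
      exact diff_subset_compl _ _
    refine measure_mono_null hsub ?_
    rw [prob_compl_eq_one_sub hBmeas, hPB, tsub_self]
  -- conclude
  have hbdd : BddAbove (Set.range fun A : {A : Set (Fin d → ℝ) // MeasurableSet A} =>
      |(P A.1).toReal - (Q A.1).toReal|) := by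
    refine ⟨1 - ∏ i : Fin d, (1 - δ * |v i|), ?_⟩
    rintro _ ⟨A, rfl⟩
    exact hupper A.1 A.2
  refine le_antisymm (ciSup_le fun A => hupper A.1 A.2) ?_
  refine le_ciSup_of_le hbdd ⟨A₀, hA₀meas⟩ ?_
  rw [hQA₀, hPA₀]
  simp only [ENNReal.toReal_zero, sub_zero]
  rw [abs_of_nonneg (by linarith)]
end
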